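/- Let 𝔤 be a metric Lie algebra. Set L̂₀𝔤 := L₀𝔤 × ℝ and define μ₁ : L̂₀𝔤 → P₀𝔤 by μ₁(λ,r) := λ, μ₂(γ₁,γ₂) := [γ₁,γ₂] (pointwise), and μ₂(γ,(λ,r)) := ([γ,λ], −2∫₀¹ ⟨γ(τ), λ'(τ)⟩ dτ), where λ' is the derivative of λ. Then the strict 2-term L∞-algebra identities hold: (i) μ₁(μ₂(γ,(λ,r))) = [γ, μ₁(λ,r)]; (ii) μ₂(μ₁(λ₁,r₁),(λ₂,r₂)) = −μ₂(μ₁(λ₂,r₂),(λ₁,r₁)); and (iii) μ₂([γ₁,γ₂],(λ,r)) = μ₂(γ₁, μ₂(γ₂,(λ,r))) − μ₂(γ₂, μ₂(γ₁,(λ,r))) for all γ,γ₁,γ₂ ∈ P₀𝔤 and (λ,r),(λᵢ,rᵢ) ∈ L̂₀𝔤. Hence the loop model 𝔰𝔱𝔯𝔦𝔫𝔤_lp(𝔤) = (L̂₀𝔤 → P₀𝔤) is a strict Lie 2-algebra. -/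

import Mathlib

/-- The based path space `P₀𝔤`: smooth maps `ℝ → 𝔤` vanishing at `0`. -/
def PathAlg (E : Type*) [NormedAddCommGroup E] [NormedSpace ℝ E] : Set (ℝ → E) :=
  {γ | ContDiff ℝ (⊤ : ℕ∞) γ ∧ γ 0 = 0}

/-- The based loop space `L₀𝔤`: based paths also vanishing at `1`. -/
def LoopAlg (E : Type*) [NormedAddCommGroup E] [NormedSpace ℝ E] : Set (ℝ → E) :=
  {γ | γ ∈ PathAlg E ∧ γ 1 = 0}

/-- The binary product `μ₂(γ,(λ,r)) = ([γ,λ], −2∫₀¹ ⟨γ(τ), λ'(τ)⟩ dτ)` of the loop model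
of the string Lie 2-algebra. -/
noncomputable def stringMu2 {E : Type*} [NormedAddCommGroup E] [NormedSpace ℝ E]
    (br : E →ₗ[ℝ] E →ₗ[ℝ] E) (B : E →ₗ[ℝ] E →ₗ[ℝ] ℝ)
    (γ : ℝ → E) (p : (ℝ → E) × ℝ) : (ℝ → E) × ℝ :=
  ((fun τ => br (γ τ) (p.1 τ)), -2 * ∫ τ in (0:ℝ)..1, B (γ τ) (deriv p.1 τ))

section Aux

variable {E F G : Type*}
  [NormedAddCommGroup E] [NormedSpace ℝ E] [FiniteDimensional ℝ E]
  [NormedAddCommGroup F] [NormedSpace ℝ F] [FiniteDimensional ℝ F]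
  [NormedAddCommGroup G] [NormedSpace ℝ G]

/-- Continuous version of a bilinear map on finite-dimensional spaces. -/
noncomputable def bilCLM (T : E →ₗ[ℝ] F →ₗ[ℝ] G) : E →L[ℝ] F →L[ℝ] G :=
  LinearMap.toContinuousLinearMap
    { toFun := fun x => LinearMap.toContinuousLinearMap (T x)
      map_add' := by intros; ext; simp
      map_smul' := by intros; ext; simp }

@[simp] lemma bilCLM_apply (T : E →ₗ[ℝ] F →ₗ[ℝ] G) (x : E) (y : F) :
    bilCLM T x y = T x y := rfl

lemma bil_hasDerivAt (T : E →ₗ[ℝ] F →ₗ[ℝ] G) {g : ℝ → E} {h : ℝ → F}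
    (hg : ContDiff ℝ (⊤ : ℕ∞) g) (hh : ContDiff ℝ (⊤ : ℕ∞) h) (x : ℝ) :
    HasDerivAt (fun τ => T (g τ) (h τ))
      (T (deriv g x) (h x) + T (g x) (deriv h x)) x := by
  have hg' : HasDerivAt g (deriv g x) x :=
    ((hg.differentiable (by simp)) x).hasDerivAt
  have hh' : HasDerivAt h (deriv h x) x :=
    ((hh.differentiable (by simp)) x).hasDerivAt
  have h1 : HasDerivAt (fun τ => bilCLM T (g τ)) ((bilCLM T) (deriv g x)) x :=
    (bilCLM T).hasFDerivAt.comp_hasDerivAt x hg'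
  have := h1.clm_apply hh'
  simpa using this

lemma bil_continuous (T : E →ₗ[ℝ] F →ₗ[ℝ] G) {g : ℝ → E} {h : ℝ → F}
    (hg : Continuous g) (hh : Continuous h) :
    Continuous (fun τ => T (g τ) (h τ)) := by
  have : Continuous (fun τ => bilCLM T (g τ) (h τ)) :=
    (((bilCLM T).continuous.comp hg).clm_apply hh)
  simpa using this

lemma bil_contDiff (T : E →ₗ[ℝ] F →ₗ[ℝ] G) {g : ℝ → E} {h : ℝ → F}
    (hg : ContDiff ℝ (⊤ : ℕ∞) g) (hh : ContDiff ℝ (⊤ : ℕ∞) h) :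
    ContDiff ℝ (⊤ : ℕ∞) (fun τ => T (g τ) (h τ)) := by
  have : ContDiff ℝ (⊤ : ℕ∞) (fun τ => bilCLM T (g τ) (h τ)) :=
    (((bilCLM T).contDiff.comp hg).clm_apply hh)
  simpa using this

lemma bil_deriv (T : E →ₗ[ℝ] F →ₗ[ℝ] G) {g : ℝ → E} {h : ℝ → F}
    (hg : ContDiff ℝ (⊤ : ℕ∞) g) (hh : ContDiff ℝ (⊤ : ℕ∞) h) :
    (deriv fun τ => T (g τ) (h τ))
      = fun x => T (deriv g x) (h x) + T (g x) (deriv h x) :=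
  funext fun x => (bil_hasDerivAt T hg hh x).deriv

lemma bil_integral_deriv [CompleteSpace G] (T : E →ₗ[ℝ] F →ₗ[ℝ] G) {g : ℝ → E} {h : ℝ → F}
    (hg : ContDiff ℝ (⊤ : ℕ∞) g) (hh : ContDiff ℝ (⊤ : ℕ∞) h) :
    ∫ τ in (0:ℝ)..1, (T (deriv g τ) (h τ) + T (g τ) (deriv h τ))
      = T (g 1) (h 1) - T (g 0) (h 0) := by
  exact intervalIntegral.integral_eq_sub_of_hasDerivAt
    (f := fun τ => T (g τ) (h τ)) (fun x _ => bil_hasDerivAt T hg hh x)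
    (((bil_continuous T (hg.continuous_deriv (by simp)) hh.continuous).add
      (bil_continuous T hg.continuous (hh.continuous_deriv (by simp)))).intervalIntegrable _ _)

end Aux

/-- For a metric Lie algebra `𝔤` (encoded as a finite-dimensional normed
space `E` with Lie bracket `br` and invariant nondegenerate symmetric form `B`), the loop
model `𝔰𝔱𝔯𝔦𝔫𝔤_lp(𝔤) = (L̂₀𝔤 → P₀𝔤)` with `L̂₀𝔤 = L₀𝔤 × ℝ`, `μ₁(λ,r) = λ`,
`μ₂(γ₁,γ₂) = [γ₁,γ₂]` and `μ₂(γ,(λ,r)) = ([γ,λ], −2∫₀¹⟨γ,λ'⟩)` satisfies the strict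
2-term L∞-algebra identities, i.e. it is a strict Lie 2-algebra. -/
theorem string_loop_model_is_strict_lie_two_algebra
    {E : Type*} [NormedAddCommGroup E] [NormedSpace ℝ E] [FiniteDimensional ℝ E]
    (br : E →ₗ[ℝ] E →ₗ[ℝ] E)
    (h_anti : ∀ x y : E, br x y = - br y x)
    (h_jacobi : ∀ x y z : E,
      br x (br y z) + br y (br z x) + br z (br x y) = 0)
    (B : E →ₗ[ℝ] E →ₗ[ℝ] ℝ)
    (h_B_symm : ∀ x y : E, B x y = B y x)
    (h_B_inv : ∀ x y z : E, B (br x y) z = B x (br y z))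
    (h_B_nondeg : ∀ x : E, (∀ y : E, B x y = 0) → x = 0) :
    -- (i)  μ₁(μ₂(γ,(λ,r))) = [γ, μ₁(λ,r)]
    (∀ γ ∈ PathAlg E, ∀ lam ∈ LoopAlg E, ∀ r : ℝ,
      (stringMu2 br B γ (lam, r)).1 = fun τ => br (γ τ) (lam τ)) ∧
    -- (ii)  μ₂(μ₁(λ₁,r₁),(λ₂,r₂)) = −μ₂(μ₁(λ₂,r₂),(λ₁,r₁))
    (∀ lam₁ ∈ LoopAlg E, ∀ lam₂ ∈ LoopAlg E, ∀ r₁ r₂ : ℝ,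
      stringMu2 br B lam₁ (lam₂, r₂) = - stringMu2 br B lam₂ (lam₁, r₁)) ∧
    -- (iii)  μ₂([γ₁,γ₂],(λ,r)) = μ₂(γ₁, μ₂(γ₂,(λ,r))) − μ₂(γ₂, μ₂(γ₁,(λ,r)))
    (∀ γ₁ ∈ PathAlg E, ∀ γ₂ ∈ PathAlg E, ∀ lam ∈ LoopAlg E, ∀ r : ℝ,
      stringMu2 br B (fun τ => br (γ₁ τ) (γ₂ τ)) (lam, r)
        = stringMu2 br B γ₁ (stringMu2 br B γ₂ (lam, r))
          - stringMu2 br B γ₂ (stringMu2 br B γ₁ (lam, r))) := by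
  refine ⟨?_, ?_, ?_⟩
  · -- (i)
    intro γ _ lam _ r
    rfl
  · -- (ii)
    rintro lam₁ ⟨⟨h₁s, h₁0⟩, h₁1⟩ lam₂ ⟨⟨h₂s, h₂0⟩, h₂1⟩ r₁ r₂
    have c12 : Continuous fun τ => B (lam₁ τ) (deriv lam₂ τ) :=
      bil_continuous B h₁s.continuous (h₂s.continuous_deriv (by simp))
    have c21 : Continuous fun τ => B (lam₂ τ) (deriv lam₁ τ) :=
      bil_continuous B h₂s.continuous (h₁s.continuous_deriv (by simp))
    have c11 : Continuous fun τ => B (deriv lam₁ τ) (lam₂ τ) :=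
      bil_continuous B (h₁s.continuous_deriv (by simp)) h₂s.continuous
    have key := bil_integral_deriv B h₁s h₂s
    rw [h₁0, h₁1, h₂0, h₂1] at key
    simp only [map_zero, LinearMap.zero_apply, sub_zero, sub_self] at key
    have hadd : (∫ τ in (0:ℝ)..1, B (deriv lam₁ τ) (lam₂ τ))
        + ∫ τ in (0:ℝ)..1, B (lam₁ τ) (deriv lam₂ τ) = 0 := by
      rw [← intervalIntegral.integral_add (c11.intervalIntegrable _ _)
        (c12.intervalIntegrable _ _)]
      exact key
    have hsym : (∫ τ in (0:ℝ)..1, B (deriv lam₁ τ) (lam₂ τ))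
        = ∫ τ in (0:ℝ)..1, B (lam₂ τ) (deriv lam₁ τ) :=
      intervalIntegral.integral_congr (fun τ _ => h_B_symm _ _)
    rw [Prod.ext_iff]
    constructor
    · funext τ
      simp only [stringMu2, Prod.fst_neg, Pi.neg_apply]
      exact h_anti _ _
    · simp only [stringMu2, Prod.snd_neg]
      rw [hsym] at hadd
      linarith
  · -- (iii)
    rintro γ₁ ⟨h₁s, h₁0⟩ γ₂ ⟨h₂s, h₂0⟩ lam ⟨⟨hls, hl0⟩, hl1⟩ r
    have cγ₁ := h₁s.continuous
    have cγ₂ := h₂s.continuous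
    have cl := hls.continuous
    have dγ₁ := h₁s.continuous_deriv (by simp)
    have dγ₂ := h₂s.continuous_deriv (by simp)
    have dl := hls.continuous_deriv (by simp)
    rw [Prod.ext_iff]
    constructor
    · -- first components: Jacobi identity
      funext τ
      simp only [stringMu2, Prod.fst_sub, Pi.sub_apply]
      set x := γ₁ τ; set y := γ₂ τ; set z := lam τ
      have key : br (br x y) z - (br x (br y z) - br y (br x z))
          = -(br x (br y z) + br y (br z x) + br z (br x y)) := by
        rw [h_anti z (br x y), h_anti z x, map_neg]
        abel
      rw [h_jacobi x y z, neg_zero, sub_eq_zero] at key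
      exact key
    · -- second components
      simp only [stringMu2, Prod.snd_sub]
      have hd₂ : (deriv fun τ => br (γ₂ τ) (lam τ))
          = fun x => br (deriv γ₂ x) (lam x) + br (γ₂ x) (deriv lam x) :=
        bil_deriv br h₂s hls
      have hd₁ : (deriv fun τ => br (γ₁ τ) (lam τ))
          = fun x => br (deriv γ₁ x) (lam x) + br (γ₁ x) (deriv lam x) :=
        bil_deriv br h₁s hls
      rw [hd₁, hd₂]
      -- the three integrands
      set f0 : ℝ → ℝ := fun τ => B (br (γ₁ τ) (γ₂ τ)) (deriv lam τ) with hf0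
      set f1 : ℝ → ℝ := fun τ =>
        B (γ₁ τ) (br (deriv γ₂ τ) (lam τ) + br (γ₂ τ) (deriv lam τ)) with hf1
      set f2 : ℝ → ℝ := fun τ =>
        B (γ₂ τ) (br (deriv γ₁ τ) (lam τ) + br (γ₁ τ) (deriv lam τ)) with hf2
      set Z : ℝ → ℝ := fun τ =>
        B (br (deriv γ₁ τ) (γ₂ τ) + br (γ₁ τ) (deriv γ₂ τ)) (lam τ)
          + B (br (γ₁ τ) (γ₂ τ)) (deriv lam τ) with hZdef
      have cf0 : Continuous f0 :=
        bil_continuous B (bil_continuous br cγ₁ cγ₂) dl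
      have cf1 : Continuous f1 :=
        bil_continuous B cγ₁
          ((bil_continuous br dγ₂ cl).add (bil_continuous br cγ₂ dl))
      have cf2 : Continuous f2 :=
        bil_continuous B cγ₂
          ((bil_continuous br dγ₁ cl).add (bil_continuous br cγ₁ dl))
      have cZ : Continuous Z :=
        (bil_continuous B
          ((bil_continuous br dγ₁ cγ₂).add (bil_continuous br cγ₁ dγ₂)) cl).add cf0
      -- the total-derivative integral vanishes
      have hZ : ∫ τ in (0:ℝ)..1, Z τ = 0 := by
        have h := bil_integral_deriv B (bil_contDiff br h₁s h₂s) hls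
        have hdg : (deriv fun τ => br (γ₁ τ) (γ₂ τ))
            = fun x => br (deriv γ₁ x) (γ₂ x) + br (γ₁ x) (deriv γ₂ x) :=
          bil_deriv br h₁s h₂s
        rw [hdg, hl0, hl1] at h
        simpa only [hZdef, map_zero, sub_zero, sub_self] using h
      -- pointwise identity: f1 - f2 = Z + f0
      have hpt : Set.EqOn (fun τ => f1 τ - f2 τ) (fun τ => Z τ + f0 τ)
          (Set.uIcc (0:ℝ) 1) := by
        intro τ _
        simp only [hf0, hf1, hf2, hZdef, map_add, LinearMap.add_apply]
        have ha1 : B (br (γ₂ τ) (deriv γ₁ τ)) (lam τ)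
            = - B (br (deriv γ₁ τ) (γ₂ τ)) (lam τ) := by
          rw [h_anti (γ₂ τ) (deriv γ₁ τ)]; simp
        have ha2 : B (br (γ₂ τ) (γ₁ τ)) (deriv lam τ)
            = - B (br (γ₁ τ) (γ₂ τ)) (deriv lam τ) := by
          rw [h_anti (γ₂ τ) (γ₁ τ)]; simp
        linarith [h_B_inv (γ₁ τ) (deriv γ₂ τ) (lam τ),
          h_B_inv (γ₂ τ) (deriv γ₁ τ) (lam τ),
          h_B_inv (γ₁ τ) (γ₂ τ) (deriv lam τ),
          h_B_inv (γ₂ τ) (γ₁ τ) (deriv lam τ), ha1, ha2]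
      have hI : (∫ τ in (0:ℝ)..1, f1 τ) - ∫ τ in (0:ℝ)..1, f2 τ
          = ∫ τ in (0:ℝ)..1, f0 τ := by
        rw [← intervalIntegral.integral_sub (cf1.intervalIntegrable _ _)
          (cf2.intervalIntegrable _ _), intervalIntegral.integral_congr hpt,
          intervalIntegral.integral_add (cZ.intervalIntegrable _ _)
            (cf0.intervalIntegrable _ _), hZ, zero_add]
      linarith [hI]
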